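/- Let d ≥ 2 and n ≥ 2 be integers, let v ∈ ℤ^d have every entry coprime to n, and let δ ∈ ℤ^d. Then for every pair of coordinates 1 ≤ k < l ≤ d, the bivariate projection of L(n,v,δ) has equal Euclidean and wrap-around separation distances: min_{x,y ∈ L(n,v,δ), x ≠ y} ‖π_{k,l}(x) − π_{k,l}(y)‖ = min_{x,y ∈ L(n,v,δ), x ≠ y} w(π_{k,l}(x) − π_{k,l}(y)), where π_{k,l}(u) = (u_k, u_l) and ‖·‖ is the Euclidean norm on ℝ². Consequently, the bivariate wrap-around criterion c_WS2(L(n,v,δ)) = Σ_{1≤k<l≤d} [min_{x≠y} w(π_{k,l}(x)−π_{k,l}(y))]^{−1} equals the bivariate Euclidean criterion c_RS2(L(n,v,δ)) = Σ_{1≤k<l≤d} [min_{x≠y} ‖π_{k,l}(x)−π_{k,l}(y)‖]^{−1}. -/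

import Mathlib

open Finset

/-- Distance from a real number to the nearest integer: w(t) = min over z in ZZ of |t - z|. -/
noncomputable def nid (t : ℝ) : ℝ := ⨅ z : ℤ, |t - (z : ℝ)|

/-- Wrap-around distance on ℝ^d. -/
noncomputable def wdist {d : ℕ} (u : Fin d → ℝ) : ℝ := Real.sqrt (∑ k, nid (u k) ^ 2)

/-- Lattice-based Latin hypercube design
L(n,v,δ) = { z + i·v/n + δ/n + 1_d/(2n) : z ∈ ℤ^d, i ∈ ℤ } ∩ [0,1]^d. -/
def LHDset (d n : ℕ) (v : Fin d → ℤ) (δ : Fin d → ℝ) : Set (Fin d → ℝ) :=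
  {x | (∃ (z : Fin d → ℤ) (i : ℤ),
          x = fun k => (z k : ℝ) + (i : ℝ) * (v k : ℝ) / n + δ k / n + 1 / (2 * n)) ∧
       ∀ k, x k ∈ Set.Icc (0 : ℝ) 1}

/-!
Index the points of L(n,v,δ) by `m : ZMod n`, coordinate `k` of point `m` being
`((m v_k + δ_k).val + 1/2) / n`. The wrap-around distance never exceeds the Euclidean one, and
the wrap-around distance between the points `m + c` and `m` depends only on `c`. As `v_k` is a
unit, the gap `|x_k(m + c) - x_k(m)|` exceeds `1/2` for fewer than `n/2` values of `m`, so some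
`m` has both gaps in coordinates `k` and `l` at most `1/2`, where the wrap-around and Euclidean
gaps agree. Hence every wrap-around value is also a Euclidean value, and the minima coincide.
-/

lemma nid_eq_abs_sub_round (t : ℝ) : nid t = |t - round t| :=
  le_antisymm (ciInf_le ⟨0, by rintro _ ⟨z, rfl⟩; exact abs_nonneg _⟩ (round t))
    (le_ciInf (round_le t))

lemma nid_nonneg (t : ℝ) : 0 ≤ nid t := by
  rw [nid_eq_abs_sub_round]; exact abs_nonneg _

lemma nid_le_abs (t : ℝ) : nid t ≤ |t| := by
  simpa [nid_eq_abs_sub_round] using round_le t 0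

lemma nid_add_intCast (t : ℝ) (z : ℤ) : nid (t + z) = nid t := by
  rw [nid_eq_abs_sub_round, nid_eq_abs_sub_round, round_add_intCast, Int.cast_add,
    add_sub_add_right_eq_sub]

lemma nid_eq_abs_of_abs_le_half {t : ℝ} (ht : |t| ≤ 1 / 2) : nid t = |t| := by
  refine le_antisymm (nid_le_abs t) ?_
  rw [nid_eq_abs_sub_round]
  rcases eq_or_ne (round t) 0 with h | h
  · simp [h]
  · have h1 : (1 : ℝ) ≤ |(round t : ℝ)| := by exact_mod_cast Int.one_le_abs h
    have h2 := abs_sub_abs_le_abs_sub (round t : ℝ) t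
    rw [abs_sub_comm] at h2
    linarith

lemma nid_intCast_div_eq_of_intCast_eq {n : ℕ} {a b : ℤ} (h : (a : ZMod n) = b) :
    nid (a / n) = nid (b / n) := by
  rcases eq_or_ne n 0 with rfl | hn
  · simp
  obtain ⟨e, he⟩ := (ZMod.intCast_eq_intCast_iff_dvd_sub a b n).mp h
  have hb : (b : ℝ) = a + n * e := by exact_mod_cast (by linarith : b = a + n * e)
  rw [hb, add_div, mul_div_cancel_left₀ _ (Nat.cast_ne_zero.mpr hn), nid_add_intCast]

lemma wdist_pair (a b : ℝ) : wdist ![a, b] = √(nid a ^ 2 + nid b ^ 2) := by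
  simp [wdist, Fin.sum_univ_two]

lemma wdist_pair_le (a b : ℝ) : wdist ![a, b] ≤ √(a ^ 2 + b ^ 2) := by
  have hsq (t : ℝ) : nid t ^ 2 ≤ t ^ 2 := by
    simpa using pow_le_pow_left₀ (nid_nonneg t) (nid_le_abs t) 2
  rw [wdist_pair]
  exact Real.sqrt_le_sqrt (add_le_add (hsq a) (hsq b))

namespace ZMod

variable {n : ℕ} [NeZero n]

def valShift (x w : ZMod n) : ℤ := ((x + w).val : ℤ) - x.val

lemma valShift_eq (x w : ZMod n) :
    valShift x w = if x.val + w.val < n then (w.val : ℤ) else w.val - n := by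
  have hx := x.val_lt
  have hw := w.val_lt
  rw [valShift, val_add]
  split_ifs with h
  · rw [Nat.mod_eq_of_lt h]; push_cast; ring
  · rw [Nat.mod_eq_sub_mod (not_lt.mp h), Nat.mod_eq_of_lt (by omega)]
    push_cast [Nat.cast_sub (not_lt.mp h)]
    ring

lemma intCast_valShift (x w : ZMod n) : (valShift x w : ZMod n) = w := by
  simp [valShift]

lemma card_filter_val_lt (t : ℕ) : #{x : ZMod n | x.val < t} = min n t := by
  obtain ⟨k, rfl⟩ : ∃ k, n = k + 1 := Nat.exists_eq_succ_of_ne_zero (NeZero.ne n)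
  exact Fin.card_filter_val_lt

lemma two_mul_card_large_valShift_lt (w : ZMod n) :
    2 * #{x : ZMod n | n < 2 * |valShift x w|} < n := by
  have hw := w.val_lt
  have hpos := NeZero.pos n
  rcases lt_trichotomy (2 * w.val) n with h | h | h
  · have hsub : ({x | n < 2 * |valShift x w|} : Finset (ZMod n)) ⊆
        ({x | ¬ x.val < n - w.val} : Finset (ZMod n)) := by
      intro x
      simp only [mem_filter, mem_univ, true_and, valShift_eq]
      split_ifs <;> simp only [abs_eq_max_neg] <;> omega
    have := card_le_card hsub
    have := card_filter_add_card_filter_not (s := univ) (fun x : ZMod n => x.val < n - w.val)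
    rw [card_filter_val_lt, card_univ, ZMod.card] at this
    omega
  · have hempty : ({x | n < 2 * |valShift x w|} : Finset (ZMod n)) = ∅ := by
      refine filter_false_of_mem fun x _ => ?_
      rw [valShift_eq]
      split_ifs <;> simp only [abs_eq_max_neg] <;> omega
    rw [hempty, card_empty]
    omega
  · have hsub : ({x | n < 2 * |valShift x w|} : Finset (ZMod n)) ⊆
        ({x | x.val < n - w.val} : Finset (ZMod n)) := by
      intro x
      simp only [mem_filter, mem_univ, true_and, valShift_eq]
      split_ifs <;> simp only [abs_eq_max_neg] <;> omega
    have := card_le_card hsub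
    rw [card_filter_val_lt] at this
    omega

lemma two_mul_card_large_valShift_mul_add_lt {u : ZMod n} (hu : IsUnit u) (δ w : ZMod n) :
    2 * #{m : ZMod n | n < 2 * |valShift (m * u + δ) w|} < n := by
  rw [card_equiv ((Units.mulRight hu.unit).trans (Equiv.addRight δ))
    (t := {x : ZMod n | n < 2 * |valShift x w|}) (by simp)]
  exact two_mul_card_large_valShift_lt w

lemma exists_two_mul_abs_valShift_le {u₁ u₂ : ZMod n} (hu₁ : IsUnit u₁) (hu₂ : IsUnit u₂)
    (δ₁ δ₂ w₁ w₂ : ZMod n) :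
    ∃ m, 2 * |valShift (m * u₁ + δ₁) w₁| ≤ n ∧ 2 * |valShift (m * u₂ + δ₂) w₂| ≤ n := by
  have hlt : #(({m | n < 2 * |valShift (m * u₁ + δ₁) w₁|} : Finset (ZMod n)) ∪
      ({m | n < 2 * |valShift (m * u₂ + δ₂) w₂|} : Finset (ZMod n))) <
        #(univ : Finset (ZMod n)) := by
    have h₁ := two_mul_card_large_valShift_mul_add_lt hu₁ δ₁ w₁
    have h₂ := two_mul_card_large_valShift_mul_add_lt hu₂ δ₂ w₂
    rw [card_univ, ZMod.card]
    exact (card_union_le _ _).trans_lt (by omega)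
  obtain ⟨m, -, hm⟩ := exists_mem_notMem_of_card_lt_card hlt
  simp only [mem_union, mem_filter, mem_univ, true_and, not_or, not_lt] at hm
  exact ⟨m, hm⟩

end ZMod

open ZMod

section DesignPoints

variable {n : ℕ} {ι : Type*}

noncomputable def lhdPoint (v δ : ι → ZMod n) (m : ZMod n) (k : ι) : ℝ :=
  (((m * v k + δ k).val : ℝ) + 1 / 2) / n

variable (v δ : ι → ZMod n)

lemma lhdPoint_add_sub (m c : ZMod n) (k : ι) :
    lhdPoint v δ (m + c) k - lhdPoint v δ m k = valShift (m * v k + δ k) (c * v k) / n := by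
  rw [lhdPoint, lhdPoint, valShift, add_mul, add_right_comm]
  push_cast
  ring

lemma lhdPoint_apply_eq_iff [NeZero n] (m m' : ZMod n) (k : ι) :
    lhdPoint v δ m k = lhdPoint v δ m' k ↔ m * v k + δ k = m' * v k + δ k := by
  rw [lhdPoint, lhdPoint, div_left_inj' (Nat.cast_ne_zero.mpr (NeZero.ne n) : (n : ℝ) ≠ 0),
    add_left_inj, Nat.cast_inj, (val_injective n).eq_iff]

lemma lhdPoint_add_eq_iff [NeZero n] (m c : ZMod n) :
    lhdPoint v δ (m + c) = lhdPoint v δ m ↔ ∀ k, c * v k = 0 := by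
  simp only [funext_iff, lhdPoint_apply_eq_iff, add_mul, add_right_comm _ (c * _), add_eq_left]

lemma nid_lhdPoint_add_sub [NeZero n] (m m' c : ZMod n) (k : ι) :
    nid (lhdPoint v δ (m + c) k - lhdPoint v δ m k)
      = nid (lhdPoint v δ (m' + c) k - lhdPoint v δ m' k) := by
  rw [lhdPoint_add_sub, lhdPoint_add_sub]
  exact nid_intCast_div_eq_of_intCast_eq (by rw [intCast_valShift, intCast_valShift])

lemma nid_lhdPoint_add_sub_eq_abs [NeZero n] {m c : ZMod n} {k : ι}
    (h : 2 * |valShift (m * v k + δ k) (c * v k)| ≤ n) :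
    nid (lhdPoint v δ (m + c) k - lhdPoint v δ m k)
      = |lhdPoint v δ (m + c) k - lhdPoint v δ m k| := by
  have hn : (0 : ℝ) < n := Nat.cast_pos.mpr (NeZero.pos n)
  apply nid_eq_abs_of_abs_le_half
  rw [lhdPoint_add_sub, abs_div, Nat.abs_cast, div_le_iff₀ hn]
  have : 2 * |(valShift (m * v k + δ k) (c * v k) : ℝ)| ≤ n := by exact_mod_cast h
  linarith

lemma exists_sqrt_eq_wdist [NeZero n] (hv : ∀ k, IsUnit (v k)) (k l : ι) {i j : ZMod n}
    (hij : lhdPoint v δ i ≠ lhdPoint v δ j) :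
    ∃ m m', lhdPoint v δ m ≠ lhdPoint v δ m' ∧
      √((lhdPoint v δ m k - lhdPoint v δ m' k) ^ 2 +
          (lhdPoint v δ m l - lhdPoint v δ m' l) ^ 2) =
        wdist ![lhdPoint v δ i k - lhdPoint v δ j k, lhdPoint v δ i l - lhdPoint v δ j l] := by
  obtain ⟨c, rfl⟩ : ∃ c, i = j + c := ⟨i - j, by abel⟩
  obtain ⟨m, hk, hl⟩ :=
    exists_two_mul_abs_valShift_le (hv k) (hv l) (δ k) (δ l) (c * v k) (c * v l)
  refine ⟨m + c, m, ?_, ?_⟩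
  · rwa [Ne, lhdPoint_add_eq_iff] at hij ⊢
  · rw [wdist_pair, nid_lhdPoint_add_sub v δ j m, nid_lhdPoint_add_sub v δ j m,
      nid_lhdPoint_add_sub_eq_abs v δ hk, nid_lhdPoint_add_sub_eq_abs v δ hl, sq_abs, sq_abs]

theorem sInf_sqrt_eq_sInf_wdist [NeZero n] (hv : ∀ k, IsUnit (v k)) (k l : ι) :
    sInf {r : ℝ | ∃ x ∈ Set.range (lhdPoint v δ), ∃ y ∈ Set.range (lhdPoint v δ), x ≠ y ∧
        r = √((x k - y k) ^ 2 + (x l - y l) ^ 2)}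
      = sInf {r : ℝ | ∃ x ∈ Set.range (lhdPoint v δ), ∃ y ∈ Set.range (lhdPoint v δ), x ≠ y ∧
        r = wdist ![x k - y k, x l - y l]} := by
  apply csInf_eq_csInf_of_forall_exists_le
  · rintro _ ⟨x, hx, y, hy, hxy, rfl⟩
    exact ⟨_, ⟨x, hx, y, hy, hxy, rfl⟩, wdist_pair_le _ _⟩
  · rintro _ ⟨_, ⟨i, rfl⟩, _, ⟨j, rfl⟩, hij, rfl⟩
    obtain ⟨m, m', hmm', he⟩ := exists_sqrt_eq_wdist v δ hv k l hij
    exact ⟨_, ⟨_, ⟨m, rfl⟩, _, ⟨m', rfl⟩, hmm', rfl⟩, he.le⟩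

end DesignPoints

lemma lhdPoint_intCast_apply {n : ℕ} [NeZero n] {ι : Type*} (v δ : ι → ℤ) (i : ℤ) (k : ι) :
    lhdPoint (fun k => (v k : ZMod n)) (fun k => (δ k : ZMod n)) i k
      = ((((i * v k + δ k) % n : ℤ) : ℝ) + 1 / 2) / n := by
  rw [lhdPoint, ← val_intCast, Int.cast_natCast]
  push_cast
  rfl

lemma intCast_add_half_div_mem_Icc_iff {n : ℕ} (hn : 0 < n) (M : ℤ) :
    ((M : ℝ) + 1 / 2) / n ∈ Set.Icc (0 : ℝ) 1 ↔ 0 ≤ M ∧ M < n := by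
  have hn' : (0 : ℝ) < n := Nat.cast_pos.mpr hn
  rw [Set.mem_Icc, le_div_iff₀ hn', div_le_iff₀ hn']
  constructor
  · rintro ⟨h0, h1⟩
    have h0' : ((-1 : ℤ) : ℝ) < M := by push_cast; linarith
    have h1' : (M : ℝ) < ((n : ℤ) : ℝ) := by push_cast; linarith
    exact ⟨by exact_mod_cast h0', by exact_mod_cast h1'⟩
  · rintro ⟨h0, h1⟩
    have h0' : (0 : ℝ) ≤ M := by exact_mod_cast h0
    have h1' : (M : ℝ) + 1 ≤ n := by exact_mod_cast h1
    constructor <;> linarith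

lemma LHDset_eq_range_lhdPoint {d n : ℕ} [NeZero n] (v δ : Fin d → ℤ) :
    LHDset d n v (fun k => (δ k : ℝ))
      = Set.range (lhdPoint (fun k => (v k : ZMod n)) (fun k => (δ k : ZMod n))) := by
  have hn : (n : ℝ) ≠ 0 := Nat.cast_ne_zero.mpr (NeZero.ne n)
  have hcoord (z i : ℤ) (k : Fin d) :
      (z : ℝ) + i * v k / n + δ k / n + 1 / (2 * n) =
        (((n * z + i * v k + δ k : ℤ) : ℝ) + 1 / 2) / n := by
    push_cast
    field_simp
  ext x
  simp only [LHDset, Set.mem_ofPred_eq, Set.mem_range]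
  constructor
  · rintro ⟨⟨z, i, rfl⟩, hx⟩
    refine ⟨i, funext fun k => ?_⟩
    have hk := hx k
    simp only [hcoord, intCast_add_half_div_mem_Icc_iff (NeZero.pos n)] at hk ⊢
    rw [lhdPoint_intCast_apply, ← Int.emod_eq_of_lt hk.1 hk.2, add_assoc,
      Int.mul_add_emod_self_left]
  · rintro ⟨m, rfl⟩
    obtain ⟨i, rfl⟩ := intCast_surjective m
    refine ⟨⟨fun k => -((i * v k + δ k) / n), i, funext fun k => ?_⟩, fun k => ?_⟩
    · rw [lhdPoint_intCast_apply, hcoord, Int.emod_def]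
      ring_nf
    · rw [lhdPoint_intCast_apply, intCast_add_half_div_mem_Icc_iff (NeZero.pos n)]
      exact ⟨Int.emod_nonneg _ (by exact_mod_cast NeZero.ne n),
        Int.emod_lt_of_pos _ (by exact_mod_cast NeZero.pos n)⟩

theorem stmt_12_general (d n : ℕ) (hn : 2 ≤ n) (v δ : Fin d → ℤ)
    (hco : ∀ k, IsCoprime (v k) (n : ℤ))
    (S : Set (Fin d → ℝ)) (hS : S = LHDset d n v (fun k => (δ k : ℝ)))
    (minE minW : Fin d → Fin d → ℝ)
    (hminE : ∀ k l, minE k l = sInf {r : ℝ | ∃ x ∈ S, ∃ y ∈ S, x ≠ y ∧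
        r = Real.sqrt ((x k - y k) ^ 2 + (x l - y l) ^ 2)})
    (hminW : ∀ k l, minW k l = sInf {r : ℝ | ∃ x ∈ S, ∃ y ∈ S, x ≠ y ∧
        r = wdist ![x k - y k, x l - y l]}) :
    (∀ k l : Fin d, k < l → minE k l = minW k l) ∧
    ∑ p ∈ Finset.univ.filter (fun p : Fin d × Fin d => p.1 < p.2), (minW p.1 p.2)⁻¹
      = ∑ p ∈ Finset.univ.filter (fun p : Fin d × Fin d => p.1 < p.2), (minE p.1 p.2)⁻¹ := by
  have : NeZero n := ⟨by omega⟩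
  have hv (k : Fin d) : IsUnit ((v k : ℤ) : ZMod n) := by
    simpa [isCoprime_zero_right] using (hco k).map (Int.castRingHom (ZMod n))
  have hEW (k l : Fin d) : minE k l = minW k l := by
    rw [hminE, hminW, hS, LHDset_eq_range_lhdPoint]
    exact sInf_sqrt_eq_sInf_wdist _ _ hv k l
  exact ⟨fun k l _ => hEW k l, sum_congr rfl fun p _ => by rw [hEW]⟩

/-- for every pair of coordinates k < l, the bivariate projection of
L(n,v,δ) has equal Euclidean and wrap-around separation distances; consequently the
criteria c_WS2 and c_RS2 coincide on L(n,v,δ). -/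
theorem stmt_12 (d n : ℕ) (hd : 2 ≤ d) (hn : 2 ≤ n) (v δ : Fin d → ℤ)
    (hco : ∀ k, IsCoprime (v k) (n : ℤ))
    (S : Set (Fin d → ℝ)) (hS : S = LHDset d n v (fun k => (δ k : ℝ)))
    (minE minW : Fin d → Fin d → ℝ)
    (hminE : ∀ k l, minE k l = sInf {r : ℝ | ∃ x ∈ S, ∃ y ∈ S, x ≠ y ∧
        r = Real.sqrt ((x k - y k) ^ 2 + (x l - y l) ^ 2)})
    (hminW : ∀ k l, minW k l = sInf {r : ℝ | ∃ x ∈ S, ∃ y ∈ S, x ≠ y ∧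
        r = wdist ![x k - y k, x l - y l]}) :
    (∀ k l : Fin d, k < l → minE k l = minW k l) ∧
    ∑ p ∈ Finset.univ.filter (fun p : Fin d × Fin d => p.1 < p.2), (minW p.1 p.2)⁻¹
      = ∑ p ∈ Finset.univ.filter (fun p : Fin d × Fin d => p.1 < p.2), (minE p.1 p.2)⁻¹ :=
  stmt_12_general d n hn v δ hco S hS minE minW hminE hminW
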